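/- arXiv:1209.3165 — 3 statements merged into one kernel-verified Lean document; each statement's English description precedes it below -/
import Mathlib

section
/- For every integer m that is divisible by none of the primes p_1, p_2, ..., p_r, there exist t ∈ ℤ and integers h_2, ..., h_r with 1 ≤ h_j ≤ p_j − 1 such that m = N(t, h_2, ..., h_r). -/
/-!
Write `P k = p₁ ⋯ p_k`. Since `N(t, h) = t·P_r + N(0, h)`, it suffices to make `N(0, h) ≡ m` modulo
each `p_i` and conclude by the Chinese remainder theorem. The relation `p_i a_i − b_i P_{i−1} = 1`
gives `b_i P_{i−1} ≡ −1 (mod p_i)` and `p_q a_q ≡ 1 (mod p_i)` for `q > i`, so modulo `p_i` the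
`j`-th summand of `N(0, h)` vanishes for `j ≠ i` and is `1 − h_i` for `j = i`. Hence
`N(0, h) ≡ −h_i (mod p_i)` for `i ≥ 2` and `N(0, h) ≡ −1 (mod 2)`, and `h_i = (−m) mod p_i` works,
its value lying in `[1, p_i − 1]` because `p_i ∤ m`.
-/

/-- `nthPrime i` is the i-th prime number with 1-based indexing:
`nthPrime 1 = 2`, `nthPrime 2 = 3`, `nthPrime 3 = 5`, ... -/
noncomputable def nthPrime (i : ℕ) : ℕ := Nat.nth Nat.Prime (i - 1)

/-- The linear expression `N(t, h_2, ..., h_r)` from the paper (formula (21)). -/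
noncomputable def NVal (r : ℕ) (a b : ℕ → ℤ) (t : ℤ) (h : ℕ → ℤ) : ℤ :=
  t * ∏ l ∈ Finset.Icc 1 r, (nthPrime l : ℤ)
    + (h r - 1) * b r * ∏ l ∈ Finset.Icc 1 (r - 1), (nthPrime l : ℤ)
    + ∑ j ∈ Finset.Icc 2 (r - 1),
        (h j - 1) * b j * (∏ l ∈ Finset.Icc 1 (j - 1), (nthPrime l : ℤ))
          * (∏ q ∈ Finset.Icc (j + 1) r, (nthPrime q : ℤ) * a q)
    - 1

open Finset

section Bezout

variable (p : ℕ → ℤ) (a b : ℕ → ℤ) (r : ℕ)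

def prefixProd (k : ℕ) : ℤ := ∏ l ∈ Icc 1 k, p l

def suffixProd (j : ℕ) : ℤ := ∏ q ∈ Icc (j + 1) r, p q * a q

/-- For `j = r` this is the term of `NVal` written outside the sum (`suffixProd` is then empty). -/
def digitTerm (h : ℕ → ℤ) (j : ℕ) : ℤ :=
  (h j - 1) * b j * prefixProd p (j - 1) * suffixProd p a r j

variable {p a b r}

lemma dvd_prefixProd {i k : ℕ} (h1 : 1 ≤ i) (hik : i ≤ k) : p i ∣ prefixProd p k :=
  dvd_prod_of_mem _ (mem_Icc.mpr ⟨h1, hik⟩)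

lemma dvd_suffixProd {i j : ℕ} (hji : j < i) (hir : i ≤ r) : p i ∣ suffixProd p a r j :=
  (dvd_mul_right _ _).trans (dvd_prod_of_mem _ (mem_Icc.mpr ⟨hji, hir⟩))

variable (hab : ∀ i, 2 ≤ i → i ≤ r → p i * a i - b i * prefixProd p (i - 1) = 1)
include hab

lemma pairwise_isCoprime_of_bezout :
    (↑(Icc 1 r) : Set ℕ).Pairwise (Function.onFun IsCoprime p) := by
  have key : ∀ l i, 1 ≤ l → l < i → i ≤ r → IsCoprime (p i) (p l) := fun l i hl hli hir =>
    IsCoprime.of_isCoprime_of_dvd_right ⟨a i, -b i, by linear_combination hab i (by omega) hir⟩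
      (dvd_prefixProd hl (Nat.le_sub_one_of_lt hli))
  intro l hl i hi hne
  simp only [coe_Icc, Set.mem_Icc] at hl hi
  rcases Nat.lt_or_gt_of_ne hne with hli | hil
  · exact (key l i hl.1 hli hi.2).symm
  · exact key i l hi.1 hil hl.2

lemma mul_prefixProd_modEq_neg_one {i : ℕ} (hi : 2 ≤ i) (hir : i ≤ r) :
    b i * prefixProd p (i - 1) ≡ -1 [ZMOD p i] :=
  Int.modEq_iff_dvd.mpr ⟨-a i, by linear_combination hab i hi hir⟩

lemma suffixProd_modEq_one {i : ℕ} (hi : 1 ≤ i) : suffixProd p a r i ≡ 1 [ZMOD p i] := by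
  have := Int.ModEq.prod (s := Icc (i + 1) r) (f := fun q => p q * a q) (g := fun _ => 1)
    fun q hq => by
      rw [mem_Icc] at hq
      obtain ⟨c, hc⟩ := dvd_prefixProd (p := p) hi (show i ≤ q - 1 by omega)
      exact Int.modEq_iff_dvd.mpr ⟨-b q * c, by linear_combination -hab q (by omega) hq.2 - b q * hc⟩
  rwa [prod_const_one] at this

lemma digitTerm_modEq_self (h : ℕ → ℤ) {i : ℕ} (hi : 2 ≤ i) (hir : i ≤ r) :
    digitTerm p a b r h i ≡ 1 - h i [ZMOD p i] := by
  have := ((mul_prefixProd_modEq_neg_one hab hi hir).mul_left (h i - 1)).mul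
    (suffixProd_modEq_one hab (by omega : 1 ≤ i))
  rw [digitTerm]
  convert this using 1 <;> ring

omit hab in
lemma dvd_digitTerm_of_ne (h : ℕ → ℤ) {i j : ℕ} (hi : 1 ≤ i) (hir : i ≤ r)
    (hne : j ≠ i) : p i ∣ digitTerm p a b r h j := by
  rcases Nat.lt_or_gt_of_ne hne with hji | hij
  · exact (dvd_suffixProd hji hir).mul_left _
  · exact ((dvd_prefixProd hi (by omega)).mul_left _).mul_right _

lemma sum_digitTerm_modEq (h : ℕ → ℤ) {i : ℕ} (hi : 2 ≤ i) (hir : i ≤ r) :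
    ∑ j ∈ Icc 2 r, digitTerm p a b r h j ≡ 1 - h i [ZMOD p i] := by
  have hrest : p i ∣ ∑ j ∈ (Icc 2 r).erase i, digitTerm p a b r h j :=
    dvd_sum fun j hj => dvd_digitTerm_of_ne h (by omega) hir (ne_of_mem_erase hj)
  rw [← add_sum_erase _ _ (mem_Icc.mpr ⟨hi, hir⟩)]
  simpa using (digitTerm_modEq_self hab h hi hir).add (Int.modEq_zero_iff_dvd.mpr hrest)

lemma prefixProd_dvd_sub_sum_digitTerm (h : ℕ → ℤ) (m : ℤ) (hm₁ : m ≡ -1 [ZMOD p 1])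
    (hm : ∀ i, 2 ≤ i → i ≤ r → m ≡ -h i [ZMOD p i]) :
    prefixProd p r ∣ m - (∑ j ∈ Icc 2 r, digitTerm p a b r h j - 1) := by
  refine prod_dvd_of_coprime (pairwise_isCoprime_of_bezout hab) fun i hi => ?_
  rw [mem_Icc] at hi
  rw [← Int.modEq_iff_dvd]
  rcases hi.1.eq_or_lt with rfl | hi₂
  · have hsum : p 1 ∣ ∑ j ∈ Icc 2 r, digitTerm p a b r h j :=
      dvd_sum fun j hj => dvd_digitTerm_of_ne h le_rfl hi.2 (by rw [mem_Icc] at hj; omega)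
    simpa using ((Int.modEq_zero_iff_dvd.mpr hsum).sub_right 1).trans hm₁.symm
  · calc ∑ j ∈ Icc 2 r, digitTerm p a b r h j - 1 ≡ 1 - h i - 1 [ZMOD p i] :=
          (sum_digitTerm_modEq hab h hi₂ hi.2).sub_right 1
      _ = -h i := by ring
      _ ≡ m [ZMOD p i] := (hm i hi₂ hi.2).symm

end Bezout

lemma NVal_eq_sum_digitTerm (r : ℕ) (hr : 2 ≤ r) (a b : ℕ → ℤ) (t : ℤ) (h : ℕ → ℤ) :
    NVal r a b t h = t * prefixProd (fun l => (nthPrime l : ℤ)) r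
      + (∑ j ∈ Icc 2 r, digitTerm (fun l => (nthPrime l : ℤ)) a b r h j - 1) := by
  obtain ⟨k, rfl⟩ : ∃ k, r = k + 1 := ⟨r - 1, by omega⟩
  have hlast : suffixProd (fun l => (nthPrime l : ℤ)) a (k + 1) (k + 1) = 1 := by
    simp [suffixProd]
  rw [sum_Icc_succ_top (by omega), digitTerm, hlast, NVal]
  simp only [digitTerm, suffixProd, prefixProd, Nat.add_sub_cancel]
  ring

lemma neg_emod_mem_Icc {n m : ℤ} (hn : 0 < n) (hm : ¬ n ∣ m) : (-m) % n ∈ Set.Icc 1 (n - 1) := by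
  have hne : (-m) % n ≠ 0 := fun h0 => hm (dvd_neg.mp (Int.dvd_of_emod_eq_zero h0))
  have := Int.emod_nonneg (-m) hn.ne'
  have := Int.emod_lt_of_pos (-m) hn
  constructor <;> omega

theorem exists_NVal_rep (r : ℕ) (hr : 3 ≤ r) (a b : ℕ → ℤ)
    (hab : ∀ i, 2 ≤ i → i ≤ r →
      (nthPrime i : ℤ) * a i - b i * ∏ l ∈ Finset.Icc 1 (i - 1), (nthPrime l : ℤ) = 1)
    (m : ℤ) (hm : ∀ i, 1 ≤ i → i ≤ r → ¬ ((nthPrime i : ℤ) ∣ m)) :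
    ∃ t : ℤ, ∃ h : ℕ → ℤ,
      (∀ j, 2 ≤ j → j ≤ r → 1 ≤ h j ∧ h j ≤ (nthPrime j : ℤ) - 1) ∧
      m = NVal r a b t h := by
  set p : ℕ → ℤ := fun l => (nthPrime l : ℤ)
  have hp_pos (i : ℕ) : 0 < p i := Int.natCast_pos.mpr (Nat.prime_nth_prime (i - 1)).pos
  have hp₁ : p 1 = 2 := by simp [p, nthPrime, Nat.nth_prime_zero_eq_two]
  set h : ℕ → ℤ := fun j => (-m) % p j
  have hm₁ : m ≡ -1 [ZMOD p 1] := by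
    have hodd : ¬ (2 : ℤ) ∣ m := hp₁ ▸ hm 1 le_rfl (by omega)
    rw [hp₁, Int.ModEq]
    omega
  have hm_digit (i : ℕ) : m ≡ -h i [ZMOD p i] := by
    simpa using (Int.mod_modEq (-m) (p i)).neg.symm
  obtain ⟨t, ht⟩ := prefixProd_dvd_sub_sum_digitTerm hab h m hm₁ fun i _ _ => hm_digit i
  refine ⟨t, h, fun j hj hjr => neg_emod_mem_Icc (hp_pos j) (hm j (by omega) hjr), ?_⟩
  rw [NVal_eq_sum_digitTerm r (by omega)]
  linear_combination ht
end

section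
/- The set of integers of the form N(t, h_2, ..., h_r) (for t ∈ ℤ and 1 ≤ h_j ≤ p_j − 1) that lie strictly between p_r and p_{r+1}² is exactly the set of prime numbers q with p_r < q < p_{r+1}². -/
lemma nthPrime_prime (i : ℕ) : (nthPrime i).Prime :=
  Nat.nth_mem_of_infinite Nat.infinite_setOf_prime _

lemma nthPrime_one : nthPrime 1 = 2 := by
  have := Nat.nth_count (p := Nat.Prime) (n := 2) Nat.prime_two
  have h2 : Nat.count Nat.Prime 2 = 0 := by decide
  simpa [nthPrime, h2] using this

lemma nthPrime_lt {i j : ℕ} (hi : 1 ≤ i) (h : i < j) : nthPrime i < nthPrime j := by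
  unfold nthPrime
  exact (Nat.nth_lt_nth Nat.infinite_setOf_prime).2 (by omega)

lemma nthPrime_mono {i j : ℕ} (hi : 1 ≤ i) (h : i ≤ j) : nthPrime i ≤ nthPrime j := by
  rcases eq_or_lt_of_le h with rfl | hlt
  · exact le_refl _
  · exact (nthPrime_lt hi hlt).le

lemma NVal_mod (r : ℕ) (hr : 3 ≤ r) (a b : ℕ → ℤ)
    (hab : ∀ i, 2 ≤ i → i ≤ r →
      (nthPrime i : ℤ) * a i - b i * ∏ l ∈ Finset.Icc 1 (i - 1), (nthPrime l : ℤ) = 1)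
    (t : ℤ) (h : ℕ → ℤ) (j : ℕ) (hj2 : 2 ≤ j) (hjr : j ≤ r) :
    ((NVal r a b t h : ℤ) : ZMod (nthPrime j)) = -(h j : ZMod (nthPrime j)) := by
  set p := nthPrime j with hp
  have hp0 : ((nthPrime j : ℤ) : ZMod p) = 0 := by
    push_cast; exact ZMod.natCast_self _
  have hbj : ((b j * ∏ l ∈ Finset.Icc 1 (j - 1), (nthPrime l : ℤ) : ℤ) : ZMod p) = -1 := by
    have := hab j hj2 hjr
    have : ((((nthPrime j : ℤ) * a j - b j * ∏ l ∈ Finset.Icc 1 (j - 1), (nthPrime l : ℤ)) : ℤ) : ZMod p) = 1 := by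
      rw [this]; norm_num
    push_cast at this ⊢
    rw [show ((nthPrime j : ZMod p)) = 0 from by exact_mod_cast hp0] at this
    linear_combination -this
  unfold NVal
  push_cast
  rcases eq_or_lt_of_le hjr with hjeq | hjlt
  · subst hjeq
    rw [Finset.prod_eq_zero (Finset.mem_Icc.2 ⟨by omega, le_refl _⟩) (by exact_mod_cast hp0)]
    rw [Finset.sum_eq_zero]
    · push_cast at hbj
      linear_combination (h j - 1) * hbj
    · intro i hi
      simp only [Finset.mem_Icc] at hi
      rw [Finset.prod_eq_zero (i := j) (Finset.mem_Icc.2 ⟨by omega, le_refl _⟩)]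
      · ring
      · rw [show ((nthPrime j : ZMod p)) = 0 from by exact_mod_cast hp0]; ring
  · rw [Finset.prod_eq_zero (i := j) (Finset.mem_Icc.2 ⟨by omega, by omega⟩) (by exact_mod_cast hp0)]
    rw [Finset.prod_eq_zero (i := j) (Finset.mem_Icc.2 ⟨by omega, by omega⟩) (by exact_mod_cast hp0)]
    rw [Finset.sum_eq_single_of_mem j (Finset.mem_Icc.2 ⟨hj2, by omega⟩)]
    · have hpa : (∏ q ∈ Finset.Icc (j + 1) r, (nthPrime q : ZMod p) * (a q : ZMod p)) = 1 := by
        apply Finset.prod_eq_one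
        intro i hi
        simp only [Finset.mem_Icc] at hi
        have habi := hab i (by omega) hi.2
        have : ((((nthPrime i : ℤ) * a i - b i * ∏ l ∈ Finset.Icc 1 (i - 1), (nthPrime l : ℤ)) : ℤ) : ZMod p) = 1 := by
          rw [habi]; norm_num
        push_cast at this
        rw [show ((∏ l ∈ Finset.Icc 1 (i-1), (nthPrime l : ZMod p))) = 0 from ?_] at this
        · linear_combination this
        · exact Finset.prod_eq_zero (i := j) (Finset.mem_Icc.2 ⟨by omega, by omega⟩)
            (by exact_mod_cast hp0)
      rw [hpa]
      push_cast at hbj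
      linear_combination (h j - 1) * hbj
    · intro i hi hne
      simp only [Finset.mem_Icc] at hi
      rcases lt_or_gt_of_ne hne with hlt | hgt
      · rw [Finset.prod_eq_zero (i := j) (Finset.mem_Icc.2 ⟨by omega, hjr⟩)]
        · ring
        · rw [show ((nthPrime j : ZMod p)) = 0 from by exact_mod_cast hp0]; ring
      · rw [Finset.prod_eq_zero (i := j) (Finset.mem_Icc.2 ⟨by omega, by omega⟩)
          (by exact_mod_cast hp0)]
        ring

lemma NVal_mod_two (r : ℕ) (hr : 3 ≤ r) (a b : ℕ → ℤ) (t : ℤ) (h : ℕ → ℤ) :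
    ((NVal r a b t h : ℤ) : ZMod 2) = 1 := by
  have hp0 : ((nthPrime 1 : ZMod 2)) = 0 := by rw [nthPrime_one]; decide
  unfold NVal
  push_cast
  rw [Finset.prod_eq_zero (i := 1) (Finset.mem_Icc.2 ⟨le_refl _, by omega⟩) hp0]
  rw [Finset.prod_eq_zero (i := 1) (Finset.mem_Icc.2 ⟨le_refl _, by omega⟩) hp0]
  rw [Finset.sum_eq_zero]
  · ring_nf; decide
  · intro i hi
    simp only [Finset.mem_Icc] at hi
    rw [Finset.prod_eq_zero (i := 1) (Finset.mem_Icc.2 ⟨le_refl _, by omega⟩) hp0]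
    ring

lemma NVal_shift (r : ℕ) (a b : ℕ → ℤ) (t : ℤ) (h : ℕ → ℤ) :
    NVal r a b t h = t * ∏ l ∈ Finset.Icc 1 r, (nthPrime l : ℤ) + NVal r a b 0 h := by
  unfold NVal; ring

theorem NVal_range_eq_primes (r : ℕ) (hr : 3 ≤ r) (a b : ℕ → ℤ)
    (hab : ∀ i, 2 ≤ i → i ≤ r →
      (nthPrime i : ℤ) * a i - b i * ∏ l ∈ Finset.Icc 1 (i - 1), (nthPrime l : ℤ) = 1) :
    {n : ℤ | (∃ t : ℤ, ∃ h : ℕ → ℤ,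
        (∀ j, 2 ≤ j → j ≤ r → 1 ≤ h j ∧ h j ≤ (nthPrime j : ℤ) - 1) ∧
        n = NVal r a b t h) ∧
      (nthPrime r : ℤ) < n ∧ n < (nthPrime (r + 1) : ℤ) ^ 2}
    = {q : ℤ | Prime q ∧ (nthPrime r : ℤ) < q ∧ q < (nthPrime (r + 1) : ℤ) ^ 2} := by
  ext n
  simp only [Set.mem_setOf_eq]
  have hp2 : (2 : ℕ) ≤ nthPrime r := (nthPrime_prime r).two_le
  constructor
  · rintro ⟨⟨t, h, hh, rfl⟩, hlow, hhigh⟩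
    refine ⟨?_, hlow, hhigh⟩
    set n := NVal r a b t h with hn
    -- n is not divisible by any nthPrime j for 1 ≤ j ≤ r
    have hnd : ∀ j, 1 ≤ j → j ≤ r → ¬ (nthPrime j : ℤ) ∣ n := by
      intro j hj1 hjr hdvd
      rcases eq_or_lt_of_le hj1 with rfl | hj2
      · -- j = 1 : contradiction with mod 2
        rw [nthPrime_one] at hdvd
        have := NVal_mod_two r hr a b t h
        rw [← hn] at this
        have h0 : ((n : ℤ) : ZMod 2) = 0 := by
          rw [ZMod.intCast_zmod_eq_zero_iff_dvd]; exact_mod_cast hdvd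
        rw [h0] at this
        exact absurd this (by decide)
      · have hj2' : 2 ≤ j := hj2
        have hmod := NVal_mod r hr a b hab t h j hj2' hjr
        rw [← hn] at hmod
        have h0 : ((n : ℤ) : ZMod (nthPrime j)) = 0 := by
          rw [ZMod.intCast_zmod_eq_zero_iff_dvd]; exact hdvd
        rw [h0] at hmod
        have hhj0 : ((h j : ℤ) : ZMod (nthPrime j)) = 0 := by
          have := hmod.symm
          rwa [neg_eq_zero] at this
        rw [ZMod.intCast_zmod_eq_zero_iff_dvd] at hhj0
        have ⟨hh1, hh2⟩ := hh j hj2' hjr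
        have := Int.le_of_dvd (by omega) hhj0
        omega
    -- positivity
    have hn0 : 0 < n := lt_trans (by exact_mod_cast (nthPrime_prime r).pos) hlow
    set m := n.toNat with hm
    have hnm : n = (m : ℤ) := (Int.toNat_of_nonneg hn0.le).symm
    have hm1 : 1 < m := by omega
    -- m is prime
    have hmp : m.Prime := by
      by_contra hnp
      have hq := Nat.minFac_prime (by omega : m ≠ 1)
      have hsq : m.minFac ^ 2 ≤ m := Nat.minFac_sq_le_self (by omega) hnp
      have hmlt : m < (nthPrime (r + 1)) ^ 2 := by
        have : (m : ℤ) < (nthPrime (r + 1) : ℤ) ^ 2 := by rw [← hnm]; exact hhigh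
        exact_mod_cast this
      have hqlt : m.minFac < nthPrime (r + 1) := by
        by_contra hle
        push_neg at hle
        have := Nat.pow_le_pow_left hle 2
        omega
      -- minFac = nthPrime (k+1) for some k+1 ≤ r
      set k := Nat.count Nat.Prime m.minFac with hk
      have hnth : Nat.nth Nat.Prime k = m.minFac := Nat.nth_count hq
      have hkr : k < r := by
        by_contra hge
        push_neg at hge
        have : nthPrime (r + 1) ≤ Nat.nth Nat.Prime k := by
          unfold nthPrime
          simp only [Nat.add_sub_cancel]
          exact (Nat.nth_le_nth Nat.infinite_setOf_prime).2 hge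
        omega
      have : nthPrime (k + 1) = m.minFac := by
        unfold nthPrime; simp only [Nat.add_sub_cancel]; exact hnth
      have hdvd : (nthPrime (k + 1) : ℤ) ∣ n := by
        rw [this, hnm]
        exact_mod_cast Nat.minFac_dvd m
      exact hnd (k + 1) (by omega) (by omega) hdvd
    rw [hnm]
    exact Int.prime_iff_natAbs_prime.2 (by simpa using hmp)
  · rintro ⟨hq, hlow, hhigh⟩
    refine ⟨?_, hlow, hhigh⟩
    -- q = n prime
    have hq0 : 0 < n := lt_trans (by exact_mod_cast (nthPrime_prime r).pos) hlow
    have hqa : n = (n.natAbs : ℤ) := (Int.natAbs_of_nonneg hq0.le).symm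
    have hqnat : n.natAbs.Prime := Int.prime_iff_natAbs_prime.1 hq
    -- no nthPrime j divides n
    have hnd : ∀ j, 1 ≤ j → j ≤ r → ¬ (nthPrime j : ℤ) ∣ n := by
      intro j hj1 hjr hdvd
      rw [hqa] at hdvd
      have hd : nthPrime j ∣ n.natAbs := by exact_mod_cast hdvd
      have := (Nat.prime_dvd_prime_iff_eq (nthPrime_prime j) hqnat).1 hd
      have hle : nthPrime j ≤ nthPrime r := nthPrime_mono hj1 hjr
      have : (n.natAbs : ℤ) = (nthPrime j : ℤ) := by exact_mod_cast this.symm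
      rw [← hqa] at this
      have : ((nthPrime j : ℤ)) ≤ (nthPrime r : ℤ) := by exact_mod_cast hle
      omega
    -- define h
    set h : ℕ → ℤ := fun j => (-n) % (nthPrime j : ℤ) with hhdef
    have hhrange : ∀ j, 2 ≤ j → j ≤ r → 1 ≤ h j ∧ h j ≤ (nthPrime j : ℤ) - 1 := by
      intro j hj2 hjr
      have hppos : (0 : ℤ) < (nthPrime j : ℤ) := by exact_mod_cast (nthPrime_prime j).pos
      have h1 : 0 ≤ h j := Int.emod_nonneg _ (by omega)
      have h2 : h j < (nthPrime j : ℤ) := Int.emod_lt_of_pos _ hppos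
      have h3 : h j ≠ 0 := by
        intro h0
        have : (nthPrime j : ℤ) ∣ -n := Int.dvd_of_emod_eq_zero h0
        exact hnd j (by omega) hjr ((dvd_neg).1 this)
      exact ⟨by omega, by omega⟩
    -- h j ≡ -n mod nthPrime j
    have hmodh : ∀ j : ℕ, ((h j : ℤ) : ZMod (nthPrime j)) = -((n : ℤ) : ZMod (nthPrime j)) := by
      intro j
      simp only [hhdef]
      rw [ZMod.intCast_mod]
      push_cast
      ring
    -- divisibility of n - NVal 0 h by each prime
    have hdvdall : ∀ j ∈ Finset.Icc 1 r, (nthPrime j : ℤ) ∣ (n - NVal r a b 0 h) := by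
      intro j hj
      simp only [Finset.mem_Icc] at hj
      rcases eq_or_lt_of_le hj.1 with rfl | hj2
      · -- j = 1
        rw [← ZMod.intCast_zmod_eq_zero_iff_dvd]
        rw [nthPrime_one]
        push_cast
        rw [show ((NVal r a b 0 h : ℤ) : ZMod 2) = 1 from NVal_mod_two r hr a b 0 h]
        have hodd : ¬ (2 : ℤ) ∣ n := by
          have := hnd 1 (le_refl _) (by omega)
          rwa [nthPrime_one] at this
        have hne0 : ((n : ℤ) : ZMod 2) ≠ 0 := by
          intro h0
          exact hodd (by exact_mod_cast (ZMod.intCast_zmod_eq_zero_iff_dvd n 2).1 h0)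
        have key : ∀ x : ZMod 2, x ≠ 0 → x = 1 := by decide
        have h1 : ((n : ℤ) : ZMod 2) = 1 := key _ hne0
        rw [h1]; ring
      · rw [← ZMod.intCast_zmod_eq_zero_iff_dvd]
        push_cast
        rw [show ((NVal r a b 0 h : ℤ) : ZMod (nthPrime j)) = -(h j : ZMod (nthPrime j)) from
          NVal_mod r hr a b hab 0 h j hj2 hj.2]
        rw [hmodh j]
        ring
    -- product divides
    have hpd : (∏ l ∈ Finset.Icc 1 r, (nthPrime l : ℤ)) ∣ (n - NVal r a b 0 h) := by
      apply Finset.prod_dvd_of_coprime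
      · intro i hi j hj hne
        simp only [Finset.mem_coe, Finset.mem_Icc] at hi hj
        simp only [Function.onFun]
        rw [Nat.isCoprime_iff_coprime]
        exact (Nat.coprime_primes (nthPrime_prime i) (nthPrime_prime j)).2 (by
          intro heq
          rcases Nat.lt_or_ge i j with hlt | hge
          · exact absurd heq (Nat.ne_of_lt (nthPrime_lt hi.1 hlt))
          · rcases eq_or_lt_of_le hge with rfl | hlt'
            · exact hne rfl
            · exact absurd heq.symm (Nat.ne_of_lt (nthPrime_lt hj.1 hlt')))
      · exact hdvdall
    refine ⟨(n - NVal r a b 0 h) / (∏ l ∈ Finset.Icc 1 r, (nthPrime l : ℤ)), h, hhrange, ?_⟩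
    rw [NVal_shift, Int.ediv_mul_cancel hpd]
    ring
end

section
/- An integer n with 11 < n < 169 is prime if and only if there exist t ∈ ℤ, h_2 ∈ {1, 2}, h_3 ∈ {1, 2, 3, 4}, h_4 ∈ {1, 2, 3, 4, 5, 6} and h_5 ∈ {1, 2, ..., 10} such that n = 2310t − 210h_5 − 18810h_4 + 114114h_3 + 190190h_2 − 285285. -/
theorem prime_iff_rep_r5 (n : ℤ) (h1 : 11 < n) (h2 : n < 169) :
    Prime n ↔ ∃ t h2 h3 h4 h5 : ℤ, (1 ≤ h2 ∧ h2 ≤ 2) ∧ (1 ≤ h3 ∧ h3 ≤ 4) ∧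
      (1 ≤ h4 ∧ h4 ≤ 6) ∧ (1 ≤ h5 ∧ h5 ≤ 10) ∧
      n = 2310 * t - 210 * h5 - 18810 * h4 + 114114 * h3 + 190190 * h2 - 285285 := by
  constructor
  · intro hp
    rw [Int.prime_iff_natAbs_prime] at hp
    have f : ∀ p : ℕ, p ∣ n.natAbs → p = 1 ∨ p = n.natAbs := hp.eq_one_or_self_of_dvd
    have f2 : ¬ (2 ∣ n.natAbs) := by intro h; rcases f 2 h with h | h <;> omega
    have f3 : ¬ (3 ∣ n.natAbs) := by intro h; rcases f 3 h with h | h <;> omega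
    have f5 : ¬ (5 ∣ n.natAbs) := by intro h; rcases f 5 h with h | h <;> omega
    have f7 : ¬ (7 ∣ n.natAbs) := by intro h; rcases f 7 h with h | h <;> omega
    have f11 : ¬ (11 ∣ n.natAbs) := by intro h; rcases f 11 h with h | h <;> omega
    refine ⟨(n + 210 * (11 - n % 11) + 18810 * (7 - n % 7) - 114114 * ((4 * n) % 5)
        - 190190 * ((2 * n) % 3) + 285285) / 2310,
      (2 * n) % 3, (4 * n) % 5, 7 - n % 7, 11 - n % 11, ?_, ?_, ?_, ?_, ?_⟩ <;> omega
  · rintro ⟨t, a, b, c, d, ⟨ha1, ha2⟩, ⟨hb1, hb2⟩, ⟨hc1, hc2⟩, ⟨hd1, hd2⟩, he⟩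
    have i2 : n % 2 ≠ 0 := by omega
    have i3 : n % 3 ≠ 0 := by omega
    have i5 : n % 5 ≠ 0 := by omega
    have i7 : n % 7 ≠ 0 := by omega
    have i11 : n % 11 ≠ 0 := by omega
    clear he
    have g2 : ¬ (2 ∣ n.natAbs) := by omega
    have g3 : ¬ (3 ∣ n.natAbs) := by omega
    have g5 : ¬ (5 ∣ n.natAbs) := by omega
    have g7 : ¬ (7 ∣ n.natAbs) := by omega
    have g11 : ¬ (11 ∣ n.natAbs) := by omega
    rw [Int.prime_iff_natAbs_prime]
    by_contra hnp
    have hq := Nat.minFac_prime (show n.natAbs ≠ 1 by omega)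
    have hdvd := Nat.minFac_dvd n.natAbs
    have hsq : n.natAbs.minFac ^ 2 ≤ n.natAbs := Nat.minFac_sq_le_self (by omega) hnp
    have hlt : n.natAbs < 169 := by omega
    have hle : n.natAbs.minFac ≤ 12 := by nlinarith [hsq, hlt]
    have hge : 2 ≤ n.natAbs.minFac := hq.two_le
    set q := n.natAbs.minFac with hqdef
    interval_cases q <;> omega
end
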